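/- Let p ∈ M and suppose qₙ' → q' in Q with representatives pₙ' ∈ π⁻¹(qₙ') in optimal position to p and p' ∈ π⁻¹(q') the unique point of its orbit in optimal position to p. If M is a proper metric space (closed bounded sets compact) and orbits are closed, then pₙ' → p'. -/
import Mathlib


open Filter

/-- Continuity of optimal positioning: if `qₙ' → q'` in the quotient (expressed via the
quotient metric `d_Q(x,y) = inf_g d(x, g • y)` on representatives), `pₙ'` are representatives
of `qₙ'` in optimal position to `p`, and `p'` is the unique point of its orbit in optimal
position to `p`, then `pₙ' → p'`, provided `M` is a proper metric space, the action is
isometric and proper, and orbits are closed. -/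
theorem optimal_representatives_converge {M G : Type*} [MetricSpace M] [ProperSpace M]
    [Group G] [TopologicalSpace G] [MulAction G M]
    (hiso : ∀ (g : G) (x y : M), dist (g • x) (g • y) = dist x y)
    (hproper : ∀ K : Set (M × M), IsCompact K →
      IsCompact {gp : G × M | (gp.1 • gp.2, gp.2) ∈ K})
    (hclosed : ∀ x : M, IsClosed (MulAction.orbit G x))
    (p p' : M) (pn : ℕ → M)
    -- qₙ' → q' : the quotient distance between the orbits of `pn n` and `p'` tends to 0
    (hconv : Tendsto (fun n => ⨅ g : G, dist (pn n) (g • p')) atTop (nhds 0))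
    -- each `pn n` is in optimal position to `p`
    (hoptn : ∀ n, dist (pn n) p = ⨅ g : G, dist (pn n) (g • p))
    -- `p'` is in optimal position to `p`
    (hopt' : dist p' p = ⨅ g : G, dist p' (g • p))
    -- and is the unique such point of its orbit
    (huniq : ∀ x ∈ MulAction.orbit G p', dist x p = dist p' p → x = p') :
    Tendsto pn atTop (nhds p') := by
  classical
  set F : M → ℝ := fun y => ⨅ g : G, dist y (g • p) with hF
  have hbdd : ∀ y : M, BddBelow (Set.range fun g : G => dist y (g • p)) :=
    fun y => ⟨0, by rintro _ ⟨g, rfl⟩; exact dist_nonneg⟩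
  have hbdd' : ∀ y : M, BddBelow (Set.range fun g : G => dist y (g • p')) :=
    fun y => ⟨0, by rintro _ ⟨g, rfl⟩; exact dist_nonneg⟩
  -- F is 1-Lipschitz
  have hFle : ∀ y z : M, F y ≤ dist y z + F z := by
    intro y z
    have h1 : ∀ g : G, F y - dist y z ≤ dist z (g • p) := by
      intro g
      have := (ciInf_le (hbdd y) g).trans (dist_triangle y z (g • p))
      linarith
    have := le_ciInf h1
    linarith
  have hFcont : ∀ y z : M, |F y - F z| ≤ dist y z := by
    intro y z
    rw [abs_le]
    constructor
    · have := hFle z y; rw [dist_comm] at this; linarith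
    · have := hFle y z; linarith
  -- F is invariant under the action
  have hFinvle : ∀ (g : G) (y : M), F (g • y) ≤ F y := by
    intro g y
    refine le_ciInf fun h => ?_
    have : dist (g • y) ((g * h) • p) = dist y (h • p) := by
      rw [mul_smul, hiso]
    calc F (g • y) ≤ dist (g • y) ((g * h) • p) := ciInf_le (hbdd _) (g * h)
      _ = dist y (h • p) := this
  have hFinv : ∀ (g : G) (y : M), F (g • y) = F y := by
    intro g y
    refine le_antisymm (hFinvle g y) ?_
    have := hFinvle g⁻¹ (g • y)
    rwa [inv_smul_smul] at this
  -- choose near-optimal group elements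
  have hex : ∀ n, ∃ g : G, dist (pn n) (g • p') <
      (⨅ g : G, dist (pn n) (g • p')) + 1 / ((n : ℝ) + 1) := by
    intro n
    apply exists_lt_of_ciInf_lt
    have : (0:ℝ) < 1 / ((n : ℝ) + 1) := by positivity
    linarith
  choose gseq hgseq using hex
  set d : ℕ → ℝ := fun n => dist (pn n) (gseq n • p') with hd
  have hd0 : Tendsto d atTop (nhds 0) := by
    have hub : Tendsto (fun n => (⨅ g : G, dist (pn n) (g • p')) + 1 / ((n : ℝ) + 1))
        atTop (nhds 0) := by
      have := hconv.add tendsto_one_div_add_atTop_nhds_zero_nat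
      simpa using this
    exact squeeze_zero (fun n => dist_nonneg) (fun n => (hgseq n).le) hub
  -- eventual boundedness
  have hbound : ∀ᶠ n in atTop, dist (pn n) p ≤ dist p' p + 1 := by
    filter_upwards [hd0.eventually (eventually_le_nhds (by norm_num : (0:ℝ) < 1))]
      with n hn
    calc dist (pn n) p = ⨅ g : G, dist (pn n) (g • p) := hoptn n
      _ ≤ dist (pn n) (gseq n • p) := ciInf_le (hbdd _) _
      _ ≤ dist (pn n) (gseq n • p') + dist (gseq n • p') (gseq n • p) :=
          dist_triangle _ _ _
      _ = d n + dist p' p := by rw [hiso]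
      _ ≤ dist p' p + 1 := by linarith
  -- every cluster point of pn is p'
  have key : ∀ (φ : ℕ → ℕ), StrictMono φ → ∀ x : M,
      Tendsto (pn ∘ φ) atTop (nhds x) → x = p' := by
    intro φ hφ x hx
    have hdφ : Tendsto (fun k => d (φ k)) atTop (nhds 0) :=
      hd0.comp hφ.tendsto_atTop
    have hg : Tendsto (fun k => gseq (φ k) • p') atTop (nhds x) := by
      rw [tendsto_iff_dist_tendsto_zero]
      have hub : Tendsto (fun k => d (φ k) + dist (pn (φ k)) x) atTop (nhds 0) := by
        have hx' : Tendsto (fun k => dist (pn (φ k)) x) atTop (nhds 0) :=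
          (tendsto_iff_dist_tendsto_zero.mp hx)
        simpa using hdφ.add hx'
      refine squeeze_zero (fun k => dist_nonneg) (fun k => ?_) hub
      calc dist (gseq (φ k) • p') x ≤ dist (gseq (φ k) • p') (pn (φ k)) + dist (pn (φ k)) x :=
            dist_triangle _ _ _
        _ = d (φ k) + dist (pn (φ k)) x := by rw [dist_comm]
    have hxorb : x ∈ MulAction.orbit G p' :=
      (hclosed p').mem_of_tendsto hg (Eventually.of_forall fun k => ⟨gseq (φ k), rfl⟩)
    -- dist x p = F x
    have h1 : Tendsto (fun k => dist (pn (φ k)) p) atTop (nhds (dist x p)) :=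
      (continuous_id.dist continuous_const).continuousAt.tendsto.comp hx
    have h2 : Tendsto (fun k => F (pn (φ k))) atTop (nhds (F x)) := by
      rw [tendsto_iff_dist_tendsto_zero]
      have hx' : Tendsto (fun k => dist (pn (φ k)) x) atTop (nhds 0) :=
        tendsto_iff_dist_tendsto_zero.mp hx
      refine squeeze_zero (fun k => dist_nonneg) (fun k => ?_) hx'
      simpa [Real.dist_eq] using hFcont (pn (φ k)) x
    have h12 : (fun k => dist (pn (φ k)) p) = fun k => F (pn (φ k)) := by
      funext k; exact hoptn (φ k)
    rw [h12] at h1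
    have hxF : dist x p = F x := tendsto_nhds_unique h1 h2
    obtain ⟨g, hgx⟩ := hxorb
    have hFx : F x = dist p' p := by
      rw [← hgx, hFinv, hF]
      exact hopt'.symm
    exact huniq x ⟨g, hgx⟩ (hxF.trans hFx)
  -- conclude by contradiction
  by_contra hne
  rw [Metric.tendsto_atTop] at hne
  push_neg at hne
  obtain ⟨ε, hε, hfreq⟩ := hne
  have hfreq' : ∃ᶠ n in atTop, ε ≤ dist (pn n) p' := by
    rw [frequently_atTop]
    intro N; obtain ⟨n, hn, hn'⟩ := hfreq N; exact ⟨n, hn, hn'⟩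
  obtain ⟨φ, hφ, hφε⟩ := extraction_of_frequently_atTop hfreq'
  obtain ⟨N0, hN0⟩ := eventually_atTop.mp hbound
  set u : ℕ → M := fun k => pn (φ (k + N0)) with hu
  have humem : ∀ k, u k ∈ Metric.closedBall p (dist p' p + 1) := by
    intro k
    have : N0 ≤ φ (k + N0) := le_trans (Nat.le_add_left N0 k) (hφ.id_le _)
    exact Metric.mem_closedBall.mpr (hN0 _ this)
  obtain ⟨x, -, ψ, hψ, hlim⟩ :=
    (isCompact_closedBall p (dist p' p + 1)).tendsto_subseq humem
  have hmono : StrictMono (fun k => φ (ψ k + N0)) :=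
    hφ.comp fun a b hab => by have := hψ hab; omega
  have hx : x = p' := key _ hmono x hlim
  have hεx : ε ≤ dist x p' := by
    have : Tendsto (fun k => dist (u (ψ k)) p') atTop (nhds (dist x p')) :=
      (continuous_id.dist continuous_const).continuousAt.tendsto.comp hlim
    refine le_of_tendsto_of_tendsto tendsto_const_nhds this ?_
    exact Eventually.of_forall fun k => hφε (ψ k + N0)
  rw [hx, dist_self] at hεx
  linarith
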